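/- arXiv:1207.2747 — 4 statements merged into one kernel-verified Lean document; each statement's English description precedes it below -/
import Mathlib

section
/- Let f be holomorphic on a neighborhood of 0 in ℂ with f(0) = 0 and λ := f'(0) satisfying 0 < |λ| < 1. Then there exist r > 0 and an analytic function B on the open ball B(0,r) with B(0) = 0, B'(0) = 1, and B(f(z)) = λ·B(z) for all z ∈ B(0,r); moreover B(z) = lim_{n→∞} f^n(z)/λ^n, where the limit is uniform on B(0,r) and f^n denotes the n-fold iterate f∘f∘···∘f. -/
/-!
Write `λ = f'(0)` and fix `ρ` with `|λ| < ρ < 1` and `ρ² < |λ|`. Near `0` we have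
`f z = λ z + O(z²)`, hence `|f z| ≤ ρ |z|` on a small ball, which `f` maps into itself, and
`|fⁿ z| ≤ ρⁿ |z|` there. The consecutive terms of `φₙ = fⁿ / λⁿ` differ by
`(f w - λ w) / λⁿ⁺¹` with `w = fⁿ z`, which is `O((ρ² / |λ|)ⁿ)` uniformly on the ball, so `φₙ`
converges uniformly. The limit is holomorphic by Weierstrass' theorem, and the normalisations
`φₙ(0) = 0`, `φₙ'(0) = 1` and the relation `φₙ ∘ f = λ φₙ₊₁` pass to the limit.
-/

open Metric Set Filter Topology

theorem exists_lt_and_sq_lt_of_lt_one {a : ℝ} (ha0 : 0 < a) (ha1 : a < 1) :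
    ∃ ρ, a < ρ ∧ ρ ^ 2 < a ∧ ρ < 1 := by
  have ha : a < √a := (Real.lt_sqrt ha0.le).2 (by nlinarith)
  obtain ⟨ρ, haρ, hρa⟩ := exists_between ha
  refine ⟨ρ, haρ, (Real.lt_sqrt (ha0.trans haρ).le).1 hρa, hρa.trans ?_⟩
  rwa [Real.sqrt_lt' one_pos, one_pow]

section LocalEstimates

variable {𝕜 : Type*} [NontriviallyNormedField 𝕜] {f : 𝕜 → 𝕜} {x l : 𝕜}

theorem AnalyticAt.isBigO_sub_sub_deriv_mul (hf : AnalyticAt 𝕜 f x) :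
    (fun z => f z - f x - deriv f x * (z - x)) =O[𝓝 x] fun z => (z - x) ^ 2 := by
  obtain ⟨p, hp⟩ := hf
  have hg : DifferentiableAt 𝕜 (dslope f x) x :=
    hp.has_fpower_series_dslope_fslope.differentiableAt
  have hfg : ∀ z, f z - f x - deriv f x * (z - x) = (z - x) * (dslope f x z - dslope f x x) := by
    intro z
    rw [← sub_smul_dslope f x z, smul_eq_mul, ← dslope_same]
    ring
  simp_rw [hfg, sq]
  exact (Asymptotics.isBigO_refl _ _).mul hg.hasDerivAt.isBigO_sub

theorem HasDerivAt.eventually_norm_le_mul {ρ : ℝ} (hf : HasDerivAt f l 0) (hf0 : f 0 = 0)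
    (hρ : ‖l‖ < ρ) : ∀ᶠ z in 𝓝 0, ‖f z‖ ≤ ρ * ‖z‖ := by
  filter_upwards [hf.isLittleO.def (sub_pos.2 hρ)] with z hz
  simp only [hf0, sub_zero, smul_eq_mul] at hz
  calc ‖f z‖ ≤ ‖f z - z * l‖ + ‖z * l‖ := norm_le_norm_sub_add _ _
    _ ≤ (ρ - ‖l‖) * ‖z‖ + ‖l‖ * ‖z‖ := by rw [norm_mul, mul_comm ‖z‖]; gcongr
    _ = ρ * ‖z‖ := by ring

theorem hasDerivAt_iterate_div_pow (hf : HasDerivAt f l x) (hx : f x = x) (hl : l ≠ 0) (n : ℕ) :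
    HasDerivAt (fun z => f^[n] z / l ^ n) 1 x := by
  simpa [hl] using (HasDerivAt.iterate _ hf hx n).div_const (l ^ n)

end LocalEstimates

section IterateDivPow

variable {𝕜 : Type*} [NormedField 𝕜] {f : 𝕜 → 𝕜} {l : 𝕜} {r ρ C : ℝ}

theorem mapsTo_ball_of_norm_le_mul (hρ : ρ ≤ 1)
    (hf : ∀ z ∈ ball (0 : 𝕜) r, ‖f z‖ ≤ ρ * ‖z‖) : MapsTo f (ball 0 r) (ball 0 r) := by
  intro z hz
  rw [mem_ball_zero_iff] at hz ⊢
  calc ‖f z‖ ≤ ρ * ‖z‖ := hf z (mem_ball_zero_iff.2 hz)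
    _ ≤ ‖z‖ := mul_le_of_le_one_left (norm_nonneg z) hρ
    _ < r := hz

theorem norm_iterate_le_pow_mul (hρ0 : 0 ≤ ρ) (hρ1 : ρ ≤ 1)
    (hf : ∀ z ∈ ball (0 : 𝕜) r, ‖f z‖ ≤ ρ * ‖z‖) (n : ℕ) :
    ∀ z ∈ ball (0 : 𝕜) r, ‖f^[n] z‖ ≤ ρ ^ n * ‖z‖ := by
  intro z hz
  induction n with
  | zero => simp
  | succ n ih =>
    rw [Function.iterate_succ_apply']
    calc ‖f (f^[n] z)‖ ≤ ρ * ‖f^[n] z‖ := hf _ ((mapsTo_ball_of_norm_le_mul hρ1 hf).iterate n hz)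
      _ ≤ ρ * (ρ ^ n * ‖z‖) := by gcongr
      _ = ρ ^ (n + 1) * ‖z‖ := by ring

theorem iterate_div_pow_eq_add_sum (n : ℕ) (z : 𝕜) :
    f^[n] z / l ^ n = z + ∑ k ∈ Finset.range n, (f^[k + 1] z / l ^ (k + 1) - f^[k] z / l ^ k) := by
  rw [Finset.sum_range_sub fun k => f^[k] z / l ^ k]
  simp

theorem iterate_succ_div_pow_sub (hl : l ≠ 0) (n : ℕ) (z : 𝕜) :
    f^[n + 1] z / l ^ (n + 1) - f^[n] z / l ^ n = (f (f^[n] z) - l * f^[n] z) / l ^ (n + 1) := by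
  rw [Function.iterate_succ_apply', pow_succ']
  field_simp

theorem norm_iterate_succ_div_pow_sub_le (hρ0 : 0 ≤ ρ) (hρ1 : ρ ≤ 1) (hl : l ≠ 0) (hC : 0 ≤ C)
    (hfρ : ∀ z ∈ ball (0 : 𝕜) r, ‖f z‖ ≤ ρ * ‖z‖)
    (hfC : ∀ z ∈ ball (0 : 𝕜) r, ‖f z - l * z‖ ≤ C * ‖z‖ ^ 2) (n : ℕ) :
    ∀ z ∈ ball (0 : 𝕜) r,
      ‖f^[n + 1] z / l ^ (n + 1) - f^[n] z / l ^ n‖ ≤ C * r ^ 2 / ‖l‖ * (ρ ^ 2 / ‖l‖) ^ n := by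
  intro z hz
  have hw : ‖f^[n] z‖ ≤ ρ ^ n * r :=
    (norm_iterate_le_pow_mul hρ0 hρ1 hfρ n z hz).trans <| by
      gcongr; exact (mem_ball_zero_iff.1 hz).le
  rw [iterate_succ_div_pow_sub hl, norm_div, norm_pow]
  calc ‖f (f^[n] z) - l * f^[n] z‖ / ‖l‖ ^ (n + 1)
      ≤ C * (ρ ^ n * r) ^ 2 / ‖l‖ ^ (n + 1) := by
        gcongr
        exact (hfC _ ((mapsTo_ball_of_norm_le_mul hρ1 hfρ).iterate n hz)).trans (by gcongr)
    _ = C * r ^ 2 / ‖l‖ * (ρ ^ 2 / ‖l‖) ^ n := by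
        rw [div_pow, pow_succ']
        field_simp
        ring

theorem tendstoUniformlyOn_iterate_div_pow [CompleteSpace 𝕜] (hρ0 : 0 ≤ ρ) (hρ1 : ρ ≤ 1)
    (hρl : ρ ^ 2 < ‖l‖) (hC : 0 ≤ C) (hfρ : ∀ z ∈ ball (0 : 𝕜) r, ‖f z‖ ≤ ρ * ‖z‖)
    (hfC : ∀ z ∈ ball (0 : 𝕜) r, ‖f z - l * z‖ ≤ C * ‖z‖ ^ 2) :
    ∃ B : 𝕜 → 𝕜, TendstoUniformlyOn (fun n z => f^[n] z / l ^ n) B atTop (ball 0 r) := by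
  have hl0 : 0 < ‖l‖ := (sq_nonneg ρ).trans_lt hρl
  have hsum : Summable fun n : ℕ => C * r ^ 2 / ‖l‖ * (ρ ^ 2 / ‖l‖) ^ n :=
    (summable_geometric_of_lt_one (by positivity) ((div_lt_one hl0).2 hρl)).mul_left _
  have hpartial := tendstoUniformlyOn_tsum_nat hsum
    (norm_iterate_succ_div_pow_sub_le hρ0 hρ1 (norm_pos_iff.1 hl0) hC hfρ hfC)
  have hid : TendstoUniformlyOn (fun (_ : ℕ) (z : 𝕜) => z) id atTop (ball 0 r) :=
    fun _ hu => .of_forall fun _ _ _ => refl_mem_uniformity hu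
  exact ⟨_, (hid.add hpartial).congr <|
    .of_forall fun n z _ => (iterate_div_pow_eq_add_sum n z).symm⟩

theorem eq_mul_of_tendsto_iterate_div_pow (hl : l ≠ 0) {z b b' : 𝕜}
    (hz : Tendsto (fun n => f^[n] z / l ^ n) atTop (𝓝 b))
    (hfz : Tendsto (fun n => f^[n] (f z) / l ^ n) atTop (𝓝 b')) : b' = l * b := by
  refine tendsto_nhds_unique hfz (((hz.comp (tendsto_add_atTop_nat 1)).const_mul l).congr ?_)
  intro n
  simp only [Function.comp_apply, Function.iterate_succ_apply, pow_succ']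
  field_simp

end IterateDivPow

theorem koenigs_linearization_general (f : ℂ → ℂ) (U : Set ℂ) (h0 : (0 : ℂ) ∈ U)
    (hf : AnalyticOnNhd ℂ f U) (hf0 : f 0 = 0)
    (hl0 : 0 < ‖deriv f 0‖) (hl1 : ‖deriv f 0‖ < 1) :
    ∃ r > 0, ∃ B : ℂ → ℂ, AnalyticOnNhd ℂ B (ball (0 : ℂ) r) ∧
      B 0 = 0 ∧ deriv B 0 = 1 ∧
      (∀ z ∈ ball (0 : ℂ) r, B (f z) = deriv f 0 * B z) ∧
      TendstoUniformlyOn (fun n z => f^[n] z / (deriv f 0) ^ n) B atTop (ball (0 : ℂ) r) := by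
  set l := deriv f 0
  have hfa : AnalyticAt ℂ f 0 := hf 0 h0
  have hl : l ≠ 0 := norm_pos_iff.1 hl0
  have hfl : HasDerivAt f l 0 := hfa.differentiableAt.hasDerivAt
  obtain ⟨ρ, hlρ, hρl, hρ1⟩ := exists_lt_and_sq_lt_of_lt_one hl0 hl1
  obtain ⟨C, hC0, hC⟩ := hfa.isBigO_sub_sub_deriv_mul.exists_nonneg
  obtain ⟨r, hr, hball⟩ := eventually_nhds_iff_ball.1 <| hfa.eventually_analyticAt.and <|
    (hfl.eventually_norm_le_mul hf0 hlρ).and hC.bound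
  simp only [hf0, sub_zero, norm_pow] at hball
  have hmaps := mapsTo_ball_of_norm_le_mul hρ1.le fun z hz => (hball z hz).2.1
  obtain ⟨B, hB⟩ := tendstoUniformlyOn_iterate_div_pow (hl0.trans hlρ).le hρ1.le hρl hC0
    (fun z hz => (hball z hz).2.1) fun z hz => (hball z hz).2.2
  have hfd : DifferentiableOn ℂ f (ball 0 r) := fun z hz => (hball z hz).1.differentiableWithinAt
  have hφ : ∀ n, DifferentiableOn ℂ (fun z => f^[n] z / l ^ n) (ball 0 r) := fun n =>
    (hfd.iterate hmaps n).div_const _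
  have hBloc := hB.tendstoLocallyUniformlyOn
  refine ⟨r, hr, B, (hBloc.differentiableOn (.of_forall hφ) isOpen_ball).analyticOnNhd isOpen_ball,
    ?_, ?_, fun z hz => eq_mul_of_tendsto_iterate_div_pow hl (hB.tendsto_at hz)
      (hB.tendsto_at (hmaps hz)), hB⟩
  · refine tendsto_nhds_unique (hB.tendsto_at (mem_ball_self hr)) ?_
    simp [Function.iterate_fixed hf0]
  · refine tendsto_nhds_unique ((hBloc.deriv (.of_forall hφ) isOpen_ball).tendsto_at
      (mem_ball_self hr)) (tendsto_const_nhds.congr fun n => ?_)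
    exact (hasDerivAt_iterate_div_pow hfl hf0 hl n).deriv.symm

/-- Koenigs linearization theorem. -/
theorem koenigs_linearization (f : ℂ → ℂ) (U : Set ℂ) (hU : IsOpen U) (h0 : (0 : ℂ) ∈ U)
    (hf : AnalyticOnNhd ℂ f U) (hf0 : f 0 = 0)
    (hl0 : 0 < ‖deriv f 0‖) (hl1 : ‖deriv f 0‖ < 1) :
    ∃ r > 0, ∃ B : ℂ → ℂ, AnalyticOnNhd ℂ B (ball (0 : ℂ) r) ∧
      B 0 = 0 ∧ deriv B 0 = 1 ∧
      (∀ z ∈ ball (0 : ℂ) r, B (f z) = deriv f 0 * B z) ∧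
      TendstoUniformlyOn (fun n z => f^[n] z / (deriv f 0) ^ n) B atTop (ball (0 : ℂ) r) :=
  koenigs_linearization_general f U h0 hf hf0 hl0 hl1
end

section
/- Let m ≥ 2 be an integer, let 0 < δ < 1/2, and let f : ℂ → ℂ satisfy |f(z)| ≤ 2|z|^m for all z with |z| ≤ δ. Then f maps the closed ball of radius δ around 0 into itself, and for every n ≥ 1 and every z with |z| ≤ δ one has |f^n(z)| ≤ (2δ)^{m^n}. -/
open Metric Set

/-! Put `g z = 2‖z‖`. For `m ≥ 2` the hypothesis gives `g (f z) ≤ g z ^ m` on the ball of radius `δ`,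
and `g ≤ 2δ ≤ 1` there, so `f` preserves the ball and `g (fⁿ z) ≤ g z ^ (mⁿ) ≤ (2δ) ^ (mⁿ)`. -/

theorem Function.iterate_le_pow_pow_of_mapsTo {α M₀ : Type*} [MonoidWithZero M₀] [Preorder M₀]
    [PosMulMono M₀] [MulPosMono M₀] {f : α → α} {s : Set α} {g : α → M₀} {m : ℕ}
    (hmaps : MapsTo f s s) (hg0 : ∀ x ∈ s, 0 ≤ g x) (hg : ∀ x ∈ s, g (f x) ≤ g x ^ m) :
    ∀ n : ℕ, ∀ x ∈ s, g (f^[n] x) ≤ g x ^ (m ^ n) := by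
  intro n
  induction n with
  | zero => simp
  | succ n ih =>
    intro x hx
    calc g (f^[n + 1] x) = g (f^[n] (f x)) := by rw [Function.iterate_succ_apply]
      _ ≤ g (f x) ^ (m ^ n) := ih (f x) (hmaps hx)
      _ ≤ (g x ^ m) ^ (m ^ n) := pow_le_pow_left₀ (hg0 _ (hmaps hx)) (hg x hx) _
      _ = g x ^ (m ^ (n + 1)) := by rw [← pow_mul, pow_succ']

theorem four_mul_pow_le_two_mul_pow {m : ℕ} (hm : 2 ≤ m) {x : ℝ} (hx : 0 ≤ x) :
    4 * x ^ m ≤ (2 * x) ^ m := by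
  have h4 : (4 : ℝ) ≤ 2 ^ m := by
    calc (4 : ℝ) = 2 ^ 2 := by norm_num
      _ ≤ 2 ^ m := pow_le_pow_right₀ one_le_two hm
  rw [mul_pow]
  gcongr

theorem gamelin_iterate_estimate_general (m : ℕ) (hm : 2 ≤ m) (δ : ℝ) (hδ : δ < 1 / 2)
    (f : ℂ → ℂ) (hf : ∀ z : ℂ, ‖z‖ ≤ δ → ‖f z‖ ≤ 2 * ‖z‖ ^ m) :
    MapsTo f (closedBall (0 : ℂ) δ) (closedBall (0 : ℂ) δ) ∧
      ∀ n : ℕ, 1 ≤ n → ∀ z : ℂ, ‖z‖ ≤ δ →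
        ‖f^[n] z‖ ≤ (2 * δ) ^ (m ^ n) := by
  have hstep : ∀ z ∈ closedBall (0 : ℂ) δ, 2 * ‖f z‖ ≤ (2 * ‖z‖) ^ m := fun z hz => by
    rw [mem_closedBall_zero_iff] at hz
    linarith [hf z hz, four_mul_pow_le_two_mul_pow hm (norm_nonneg z)]
  have hmaps : MapsTo f (closedBall (0 : ℂ) δ) (closedBall (0 : ℂ) δ) := fun z hz => by
    have hz' := mem_closedBall_zero_iff.mp hz
    have hδ0 : 0 ≤ δ := (norm_nonneg z).trans hz'
    have : (2 * δ) ^ m ≤ 2 * δ := pow_le_of_le_one (by positivity) (by linarith) (by omega)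
    rw [mem_closedBall_zero_iff]
    linarith [hstep z hz, pow_le_pow_left₀ (by positivity) (by linarith : 2 * ‖z‖ ≤ 2 * δ) m]
  refine ⟨hmaps, fun n _ z hz => ?_⟩
  have hiter := Function.iterate_le_pow_pow_of_mapsTo (g := fun z : ℂ => 2 * ‖z‖) hmaps
    (fun z _ => by positivity) hstep n z (mem_closedBall_zero_iff.mpr hz)
  calc ‖f^[n] z‖ ≤ 2 * ‖f^[n] z‖ := by linarith [norm_nonneg (f^[n] z)]
    _ ≤ (2 * ‖z‖) ^ (m ^ n) := hiter
    _ ≤ (2 * δ) ^ (m ^ n) := by gcongr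

/-- The iterate estimate from Gamelin's proof of Böttcher's theorem. -/
theorem gamelin_iterate_estimate (m : ℕ) (hm : 2 ≤ m) (δ : ℝ) (hδ0 : 0 < δ) (hδ : δ < 1 / 2)
    (f : ℂ → ℂ) (hf : ∀ z : ℂ, ‖z‖ ≤ δ → ‖f z‖ ≤ 2 * ‖z‖ ^ m) :
    MapsTo f (closedBall (0 : ℂ) δ) (closedBall (0 : ℂ) δ) ∧
      ∀ n : ℕ, 1 ≤ n → ∀ z : ℂ, ‖z‖ ≤ δ →
        ‖f^[n] z‖ ≤ (2 * δ) ^ (m ^ n) :=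
  gamelin_iterate_estimate_general m hm δ hδ f hf
end

section
/- Let σ ∈ ℝ and let Φ be a holomorphic function on the half-plane H = {Z ∈ ℂ : Re Z > σ} satisfying Φ(Z + 2πi) = Φ(Z) + 2πi for all Z ∈ H. Then there exists a holomorphic function φ on the region {z ∈ ℂ : |z| > e^σ} such that φ(exp Z) = exp(Φ(Z)) for all Z ∈ H. -/
/-!
Since `Φ(Z + 2πi) = Φ(Z) + 2πi`, the function `exp ∘ Φ` is `2πi`-periodic on the half-plane, so
`φ := exp ∘ Φ ∘ log` satisfies `φ ∘ exp = exp ∘ Φ` whatever branch `log` picks. The principal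
branch is not holomorphic on the negative axis, but near any `w` the branch `log (y / w) + log w`
is, and it differs from `log y` by a multiple of `2πi`, so `φ` agrees with a holomorphic function
near `w`.
-/

open Complex Filter Topology
open scoped Real

namespace Complex

lemma lt_log_re_of_exp_lt_norm {σ : ℝ} {z : ℂ} (hz : Real.exp σ < ‖z‖) : σ < (log z).re := by
  rw [log_re, Real.lt_log_iff_exp_lt ((Real.exp_pos σ).trans hz)]
  exact hz

section Descent

variable {σ : ℝ} {f : ℂ → ℂ}

lemma apply_eq_of_exp_eq (hper : ∀ Z : ℂ, σ < Z.re → f (Z + 2 * π * I) = f Z)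
    {Z₁ Z₂ : ℂ} (hZ₂ : σ < Z₂.re) (h : exp Z₁ = exp Z₂) : f Z₁ = f Z₂ := by
  -- Cutting `f` off outside the half-plane makes it periodic on all of `ℂ`.
  set F := {Z : ℂ | σ < Z.re}.indicator f
  have hF : Function.Periodic F (2 * π * I) := fun Z ↦ by
    have hre : (Z + 2 * π * I).re = Z.re := by simp
    simp only [F, Set.indicator_apply, Set.mem_ofPred_eq, hre]
    split_ifs with hZ
    exacts [hper Z hZ, rfl]
  obtain ⟨n, rfl⟩ := exp_eq_exp_iff_exists_int.mp h
  have hZ₁ : σ < (Z₂ + n * (2 * π * I)).re := by simpa using hZ₂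
  simpa [F, Set.indicator_of_mem, hZ₁, hZ₂] using hF.int_mul n Z₂

lemma differentiableAt_comp_log (hf : DifferentiableOn ℂ f {Z : ℂ | σ < Z.re})
    (hper : ∀ Z : ℂ, σ < Z.re → f (Z + 2 * π * I) = f Z) {w : ℂ} (hw : Real.exp σ < ‖w‖) :
    DifferentiableAt ℂ (f ∘ log) w := by
  have hw₀ : w ≠ 0 := norm_pos_iff.mp ((Real.exp_pos σ).trans hw)
  set L : ℂ → ℂ := fun y ↦ log (y / w) + log w
  have hL : DifferentiableAt ℂ L w :=
    ((differentiableAt_log (by simp [hw₀])).comp w (differentiableAt_id.div_const w)).add_const _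
  have hLw : L w = log w := by simp [L, hw₀]
  have hfL : DifferentiableAt ℂ f (L w) := hLw ▸
    hf.differentiableAt ((isOpen_lt continuous_const continuous_re).mem_nhds
      (lt_log_re_of_exp_lt_norm hw))
  have hL_eq : f ∘ log =ᶠ[𝓝 w] f ∘ L := by
    filter_upwards [(isOpen_lt continuous_const continuous_norm).mem_nhds hw] with y hy
    have hy₀ : y ≠ 0 := norm_pos_iff.mp ((Real.exp_pos σ).trans hy)
    refine (apply_eq_of_exp_eq hper ?_ ?_).symm
    · exact lt_log_re_of_exp_lt_norm hy
    · simp [L, exp_add, exp_log, hy₀, hw₀]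
  exact (hfL.comp w hL).congr_of_eventuallyEq hL_eq

theorem exists_differentiableOn_comp_exp_eq (hf : DifferentiableOn ℂ f {Z : ℂ | σ < Z.re})
    (hper : ∀ Z : ℂ, σ < Z.re → f (Z + 2 * π * I) = f Z) :
    ∃ g : ℂ → ℂ, DifferentiableOn ℂ g {z : ℂ | Real.exp σ < ‖z‖} ∧
      ∀ Z : ℂ, σ < Z.re → g (exp Z) = f Z :=
  ⟨f ∘ log, fun _ hw ↦ (differentiableAt_comp_log hf hper hw).differentiableWithinAt,
    fun Z hZ ↦ apply_eq_of_exp_eq hper hZ (exp_log (exp_ne_zero Z))⟩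

end Descent

end Complex

/-- The descent step in Milnor's proof of Böttcher's theorem. -/
theorem milnor_descent (σ : ℝ) (Φ : ℂ → ℂ)
    (hΦ : DifferentiableOn ℂ Φ {Z : ℂ | σ < Z.re})
    (hper : ∀ Z : ℂ, σ < Z.re →
      Φ (Z + 2 * Real.pi * Complex.I) = Φ Z + 2 * Real.pi * Complex.I) :
    ∃ φ : ℂ → ℂ, DifferentiableOn ℂ φ {z : ℂ | Real.exp σ < ‖z‖} ∧
      ∀ Z : ℂ, σ < Z.re → φ (Complex.exp Z) = Complex.exp (Φ Z) :=
  exists_differentiableOn_comp_exp_eq hΦ.cexp fun Z hZ ↦ by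
    rw [hper Z hZ, exp_periodic]
end

section
/- Let U ⊆ ℂ be open with f : U → U analytic, let λ ∈ ℂ with 0 < |λ| < 1, and let B be an analytic function on U with B(z) ≠ 0 for all z ∈ U and B(f(z)) = λ·B(z) on U. Let (c_n)_{n∈ℤ} be complex coefficients with c_0 = 0 such that for every z ∈ U the family (c_n·B(z)^n)_{n∈ℤ} is absolutely summable, and set F(z) := Σ_{n∈ℤ} c_n·B(z)^n. Then for each n ≠ 0 one has λ^n ≠ 1, the family (c_n·B(z)^n/(λ^n − 1))_{n∈ℤ, n≠0} is absolutely summable for every z ∈ U, and the function ψ(z) := Σ_{n≠0} c_n·B(z)^n/(λ^n − 1) satisfies ψ(f(z)) − ψ(z) = F(z) for all z ∈ U. -/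
/-!
Writing `F = ∑_{n ≠ 0} cₙ Bⁿ` (as `c₀ = 0`) and `ψ = ∑_{n ≠ 0} cₙ Bⁿ / (λⁿ - 1)`, the relation
`B ∘ f = λ B` turns `ψ ∘ f - ψ` into `∑_{n ≠ 0} cₙ Bⁿ (λⁿ - 1) / (λⁿ - 1) = F` term by term.
The series for `ψ` converges absolutely because `‖λⁿ - 1‖ ≥ min (1 - ‖λ‖) (‖λ‖⁻¹ - 1) > 0`
for all `n ≠ 0`.
-/

open Set

section NormedDivisionRing

variable {𝕜 : Type*} [NormedDivisionRing 𝕜] {l : 𝕜}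

theorem min_sub_le_norm_zpow_sub_one (hl0 : 0 < ‖l‖) (hl1 : ‖l‖ < 1) {n : ℤ} (hn : n ≠ 0) :
    min (1 - ‖l‖) (‖l‖⁻¹ - 1) ≤ ‖l ^ n - 1‖ := by
  have hdist : |‖l‖ ^ n - 1| ≤ ‖l ^ n - 1‖ := by
    simpa only [norm_zpow, norm_one] using abs_norm_sub_norm_le (l ^ n) 1
  rcases hn.lt_or_gt with hneg | hpos
  · have : ‖l‖⁻¹ ≤ ‖l‖ ^ n := by
      simpa using zpow_le_zpow_right_of_le_one₀ hl0 hl1.le (show n ≤ -1 by omega)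
    linarith [min_le_right (1 - ‖l‖) (‖l‖⁻¹ - 1), le_abs_self (‖l‖ ^ n - 1)]
  · have : ‖l‖ ^ n ≤ ‖l‖ := by
      simpa using zpow_le_zpow_right_of_le_one₀ hl0 hl1.le (show 1 ≤ n by omega)
    linarith [min_le_left (1 - ‖l‖) (‖l‖⁻¹ - 1), neg_abs_le (‖l‖ ^ n - 1)]

theorem min_sub_pos_of_norm_lt_one (hl0 : 0 < ‖l‖) (hl1 : ‖l‖ < 1) :
    0 < min (1 - ‖l‖) (‖l‖⁻¹ - 1) :=
  lt_min (by linarith) (by linarith [(one_lt_inv₀ hl0).2 hl1])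

theorem zpow_ne_one_of_norm_lt_one (hl0 : 0 < ‖l‖) (hl1 : ‖l‖ < 1) {n : ℤ} (hn : n ≠ 0) :
    l ^ n ≠ 1 := fun h => by
  have := min_sub_le_norm_zpow_sub_one hl0 hl1 hn
  rw [h, sub_self, norm_zero] at this
  exact this.not_gt (min_sub_pos_of_norm_lt_one hl0 hl1)

theorem summable_norm_div_zpow_sub_one (hl0 : 0 < ‖l‖) (hl1 : ‖l‖ < 1) {a : ℤ → 𝕜}
    (ha : Summable fun n => ‖a n‖) :
    Summable fun n : {n : ℤ // n ≠ 0} => ‖a n / (l ^ n.1 - 1)‖ := by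
  set ε := min (1 - ‖l‖) (‖l‖⁻¹ - 1)
  have hε : 0 < ε := min_sub_pos_of_norm_lt_one hl0 hl1
  refine .of_nonneg_of_le (fun _ => norm_nonneg _) (fun n => ?_) ((ha.mul_left ε⁻¹).subtype _)
  calc ‖a n / (l ^ n.1 - 1)‖ = ‖a n‖ / ‖l ^ n.1 - 1‖ := norm_div _ _
    _ ≤ ‖a n‖ / ε := div_le_div_of_nonneg_left (norm_nonneg _) hε
        (min_sub_le_norm_zpow_sub_one hl0 hl1 n.2)
    _ = ε⁻¹ * ‖a n‖ := div_eq_inv_mul _ _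

end NormedDivisionRing

theorem mul_div_sub_one_sub_div {K : Type*} [Field K] (x : K) {u : K} (hu : u ≠ 1) :
    x * u / (u - 1) - x / (u - 1) = x := by
  rw [div_sub_div_same, ← mul_sub_one, mul_div_cancel_right₀ _ (sub_ne_zero.2 hu)]

theorem boettcher_abel_type_equation_general (U : Set ℂ)
    (f : ℂ → ℂ) (hmap : MapsTo f U U)
    (l : ℂ) (hl0 : 0 < ‖l‖) (hl1 : ‖l‖ < 1)
    (B : ℂ → ℂ)
    (hBeq : ∀ z ∈ U, B (f z) = l * B z)
    (c : ℤ → ℂ) (hc0 : c 0 = 0)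
    (hsum : ∀ z ∈ U, Summable (fun n : ℤ => ‖c n * B z ^ n‖)) :
    (∀ n : ℤ, n ≠ 0 → l ^ n ≠ 1) ∧
    (∀ z ∈ U, Summable (fun n : {n : ℤ // n ≠ 0} =>
      ‖c n.1 * B z ^ n.1 / (l ^ n.1 - 1)‖)) ∧
    (∀ z ∈ U,
      (∑' n : {n : ℤ // n ≠ 0}, c n.1 * B (f z) ^ n.1 / (l ^ n.1 - 1)) -
        (∑' n : {n : ℤ // n ≠ 0}, c n.1 * B z ^ n.1 / (l ^ n.1 - 1)) =
      ∑' n : ℤ, c n * B z ^ n) := by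
  have hne : ∀ n : ℤ, n ≠ 0 → l ^ n ≠ 1 := fun n => zpow_ne_one_of_norm_lt_one hl0 hl1
  have hψ : ∀ z ∈ U, Summable (fun n : {n : ℤ // n ≠ 0} =>
      ‖c n.1 * B z ^ n.1 / (l ^ n.1 - 1)‖) := fun z hz =>
    summable_norm_div_zpow_sub_one (a := fun n => c n * B z ^ n) hl0 hl1 (hsum z hz)
  refine ⟨hne, hψ, fun z hz => ?_⟩
  have hsupp : Function.support (fun n : ℤ => c n * B z ^ n) ⊆ {n | n ≠ 0} :=
    Function.support_subset_iff'.2 fun n hn => by simp_all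
  rw [← (hψ _ (hmap hz)).of_norm.tsum_sub (hψ z hz).of_norm,
    ← tsum_subtype_eq_of_support_subset hsupp]
  refine tsum_congr fun n => ?_
  rw [hBeq z hz, mul_zpow, mul_left_comm, ← mul_comm (c n * B z ^ n.1)]
  exact mul_div_sub_one_sub_div _ (hne n n.2)

/-- Böttcher's solution of the functional equation `ψ ∘ f − ψ = F`
via the Koenigs coordinate. -/
theorem boettcher_abel_type_equation (U : Set ℂ) (hU : IsOpen U)
    (f : ℂ → ℂ) (hf : AnalyticOnNhd ℂ f U) (hmap : MapsTo f U U)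
    (l : ℂ) (hl0 : 0 < ‖l‖) (hl1 : ‖l‖ < 1)
    (B : ℂ → ℂ) (hB : AnalyticOnNhd ℂ B U) (hBne : ∀ z ∈ U, B z ≠ 0)
    (hBeq : ∀ z ∈ U, B (f z) = l * B z)
    (c : ℤ → ℂ) (hc0 : c 0 = 0)
    (hsum : ∀ z ∈ U, Summable (fun n : ℤ => ‖c n * B z ^ n‖)) :
    (∀ n : ℤ, n ≠ 0 → l ^ n ≠ 1) ∧
    (∀ z ∈ U, Summable (fun n : {n : ℤ // n ≠ 0} =>
      ‖c n.1 * B z ^ n.1 / (l ^ n.1 - 1)‖)) ∧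
    (∀ z ∈ U,
      (∑' n : {n : ℤ // n ≠ 0}, c n.1 * B (f z) ^ n.1 / (l ^ n.1 - 1)) -
        (∑' n : {n : ℤ // n ≠ 0}, c n.1 * B z ^ n.1 / (l ^ n.1 - 1)) =
      ∑' n : ℤ, c n * B z ^ n) :=
  boettcher_abel_type_equation_general U f hmap l hl0 hl1 B hBeq c hc0 hsum
end
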